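/- arXiv:2511.13498 — 2 statements merged into one kernel-verified Lean document; each statement's English description precedes it below -/
import Mathlib

section
/- Work in ℝ^n with the standard inner product ⟨·,·⟩ and standard basis e_1,…,e_n, and let V = {e_i : 1 ≤ i ≤ n} ∪ {−e_i : 1 ≤ i ≤ n}. Let Φ_D = {ε·e_i + δ·e_j : 1 ≤ i < j ≤ n, ε, δ ∈ {1,−1}}, and for nonzero α let r_α(x) = x − (2⟨x,α⟩/⟨α,α⟩)·α. Let M ⊆ V and suppose that for all distinct u, w ∈ M, if the segment [u,w] = conv{u,w} is an exposed face of the convex hull of M (IsExposed ℝ (convexHull ℝ M) (segment ℝ u w)), then u − w is a scalar multiple of some α ∈ Φ_D. Then M satisfies the strong exchange property with respect to Φ_D: for all u, v ∈ M with u ≠ v there exists α ∈ Φ_D with ⟨u,α⟩·⟨v,α⟩ < 0, r_α(u) ∈ M and r_α(v) ∈ M. -/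
/-- The `i`-th standard basis vector of `ℝ^n`. -/
noncomputable def stdVec (n : ℕ) (i : Fin n) : EuclideanSpace ℝ (Fin n) :=
  EuclideanSpace.single i 1

/-- The vertex set of the `n`-dimensional cross polytope. -/
def crossVerts (n : ℕ) : Set (EuclideanSpace ℝ (Fin n)) :=
  {v | ∃ i : Fin n, v = stdVec n i ∨ v = -stdVec n i}

/-- The root system of type `D_n`. -/
def PhiD (n : ℕ) : Set (EuclideanSpace ℝ (Fin n)) :=
  {α | ∃ i j : Fin n, i ≠ j ∧ ∃ ε δ : ℝ, (ε = 1 ∨ ε = -1) ∧ (δ = 1 ∨ δ = -1) ∧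
    α = ε • stdVec n i + δ • stdVec n j}

/-- The reflection in the hyperplane orthogonal to `α`. -/
noncomputable def reflVec {n : ℕ} (α x : EuclideanSpace ℝ (Fin n)) :
    EuclideanSpace ℝ (Fin n) :=
  x - (2 * (inner ℝ x α : ℝ) / (inner ℝ α α : ℝ)) • α

lemma inner_stdVec {n : ℕ} (i j : Fin n) :
    (inner ℝ (stdVec n i) (stdVec n j) : ℝ) = if i = j then 1 else 0 := by
  simp [stdVec, EuclideanSpace.inner_single_left, EuclideanSpace.single_apply, eq_comm]

lemma reflVec_neg {n : ℕ} (α x : EuclideanSpace ℝ (Fin n)) :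
    reflVec α (-x) = -reflVec α x := by
  unfold reflVec
  rw [inner_neg_left]
  have h : 2 * (-(inner ℝ x α : ℝ)) / (inner ℝ α α : ℝ)
      = -(2 * (inner ℝ x α : ℝ) / (inner ℝ α α : ℝ)) := by ring
  rw [h, neg_smul]
  module

lemma key {n : ℕ} {i j : Fin n} (hij : i ≠ j) {σ τ : ℝ}
    (hσ : σ = 1 ∨ σ = -1) (hτ : τ = 1 ∨ τ = -1) :
    σ • stdVec n i + (-τ) • stdVec n j ∈ PhiD n ∧
    (inner ℝ (σ • stdVec n i) (σ • stdVec n i + (-τ) • stdVec n j) : ℝ) = 1 ∧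
    (inner ℝ (τ • stdVec n j) (σ • stdVec n i + (-τ) • stdVec n j) : ℝ) = -1 ∧
    reflVec (σ • stdVec n i + (-τ) • stdVec n j) (σ • stdVec n i) = τ • stdVec n j ∧
    reflVec (σ • stdVec n i + (-τ) • stdVec n j) (τ • stdVec n j) = σ • stdVec n i := by
  have h1 : (inner ℝ (σ • stdVec n i) (σ • stdVec n i + (-τ) • stdVec n j) : ℝ) = 1 := by
    rcases hσ with rfl | rfl <;> rcases hτ with rfl | rfl <;>
      (simp only [inner_add_right, real_inner_smul_left, real_inner_smul_right, inner_stdVec,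
        if_pos rfl, if_neg hij, if_neg hij.symm]; norm_num)
  have h2 : (inner ℝ (τ • stdVec n j) (σ • stdVec n i + (-τ) • stdVec n j) : ℝ) = -1 := by
    rcases hσ with rfl | rfl <;> rcases hτ with rfl | rfl <;>
      (simp only [inner_add_right, real_inner_smul_left, real_inner_smul_right, inner_stdVec,
        if_pos rfl, if_neg hij, if_neg hij.symm]; norm_num)
  have hαα : (inner ℝ (σ • stdVec n i + (-τ) • stdVec n j)
      (σ • stdVec n i + (-τ) • stdVec n j) : ℝ) = 2 := by
    rcases hσ with rfl | rfl <;> rcases hτ with rfl | rfl <;>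
      (simp only [inner_add_right, inner_add_left, real_inner_smul_left, real_inner_smul_right,
        inner_stdVec, if_pos rfl, if_neg hij, if_neg hij.symm]; norm_num)
  refine ⟨⟨i, j, hij, σ, -τ, hσ, by rcases hτ with rfl | rfl <;> norm_num, rfl⟩, h1, h2, ?_, ?_⟩
  · unfold reflVec
    rw [h1, hαα]
    norm_num
    try module
  · unfold reflVec
    rw [h2, hαα]
    norm_num
    try module


lemma exposed_aux {n : ℕ} (M : Set (EuclideanSpace ℝ (Fin n))) (hM : M ⊆ crossVerts n)
    {i : Fin n} {u : EuclideanSpace ℝ (Fin n)} (hui : u = stdVec n i ∨ u = -stdVec n i)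
    (hu : u ∈ M) (hv : -u ∈ M)
    (hno : ∀ j : Fin n, j ≠ i → ¬(stdVec n j ∈ M ∧ -stdVec n j ∈ M)) :
    IsExposed ℝ (convexHull ℝ M) (segment ℝ u (-u)) := by
  classical
  set g : Fin n → ℝ := fun k =>
    if k = i then 0 else if stdVec n k ∈ M then -1 else if -stdVec n k ∈ M then 1 else 0
    with hg
  set w : EuclideanSpace ℝ (Fin n) := (WithLp.equiv 2 (Fin n → ℝ)).symm g with hwdef
  have hwk : ∀ k, w k = g k := fun k => rfl
  have hinner : ∀ k : Fin n, (inner ℝ w (stdVec n k) : ℝ) = g k := by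
    intro k
    rw [stdVec]
    rw [show ((1 : ℝ) : ℝ) = (1 : ℝ) from rfl] at *
    rw [EuclideanSpace.inner_single_right]
    simp [hwk]
  -- Claim A/B combined
  have hAB : ∀ m ∈ M, ((inner ℝ w m : ℝ) = 0 ∧ (m = u ∨ m = -u)) ∨ (inner ℝ w m : ℝ) = -1 := by
    intro m hm
    obtain ⟨k, hk⟩ := hM hm
    by_cases hki : k = i
    · subst hki
      left
      constructor
      · rcases hk with rfl | rfl
        · rw [hinner]; simp [hg]
        · rw [inner_neg_right, hinner]; simp [hg]
      · rcases hk with rfl | rfl <;> rcases hui with rfl | rfl <;> simp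
    · right
      rcases hk with rfl | rfl
      · have : g k = -1 := by rw [hg]; simp [hki, hm]
        rw [hinner, this]
      · have hnotpos : stdVec n k ∉ M := fun h => hno k hki ⟨h, hm⟩
        have : g k = 1 := by rw [hg]; simp [hki, hnotpos, hm]
        rw [inner_neg_right, hinner, this]
  have hA : ∀ m ∈ M, (inner ℝ w m : ℝ) ≤ 0 := by
    intro m hm
    rcases hAB m hm with ⟨h0, _⟩ | h1
    · rw [h0]
    · rw [h1]; norm_num
  have hCu : (inner ℝ w u : ℝ) = 0 := by
    rcases hui with rfl | rfl
    · rw [hinner]; simp [hg]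
    · rw [inner_neg_right, hinner]; simp [hg]
  have hlin : IsLinearMap ℝ (fun y : EuclideanSpace ℝ (Fin n) => (inner ℝ w y : ℝ)) :=
    ⟨fun x y => inner_add_right w x y, fun c x => real_inner_smul_right w x c⟩
  have hconv : ∀ y ∈ convexHull ℝ M, (inner ℝ w y : ℝ) ≤ 0 := by
    intro y hy
    exact convexHull_min hA (convex_halfSpace_le hlin 0) hy
  intro _
  refine ⟨innerSL ℝ w, ?_⟩
  ext x
  constructor
  · intro hx
    have hxM : x ∈ convexHull ℝ M := segment_subset_convexHull hu hv hx
    obtain ⟨a, b, ha, hb, hab, rfl⟩ := hx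
    have hx0 : (inner ℝ w (a • u + b • (-u)) : ℝ) = 0 := by
      rw [inner_add_right, real_inner_smul_right, real_inner_smul_right, inner_neg_right, hCu]
      ring
    refine ⟨hxM, fun y hy => ?_⟩
    simp only [innerSL_apply_apply]
    rw [hx0]
    exact hconv y hy
  · rintro ⟨hxM, hmax⟩
    have hxle : (inner ℝ w x : ℝ) ≤ 0 := hconv x hxM
    have hxge : (0 : ℝ) ≤ (inner ℝ w x : ℝ) := by
      have := hmax u (subset_convexHull ℝ M hu)
      simpa [innerSL_apply_apply, hCu] using this
    have hx0 : (inner ℝ w x : ℝ) = 0 := le_antisymm hxle hxge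
    rw [convexHull_eq] at hxM
    obtain ⟨ι, t, wt, z, hw0, hw1, hz, hxc⟩ := hxM
    have hsum : ∑ k ∈ t, wt k * (inner ℝ w (z k) : ℝ) = 0 := by
      rw [← hx0, ← hxc, Finset.centerMass_eq_of_sum_1 _ _ hw1, inner_sum]
      exact Finset.sum_congr rfl fun k _ => by rw [real_inner_smul_right]
    have hterm : ∀ k ∈ t, wt k * (inner ℝ w (z k) : ℝ) ≤ 0 := fun k hk =>
      mul_nonpos_of_nonneg_of_nonpos (hw0 k hk) (hA (z k) (hz k hk))
    have hzero : ∀ k ∈ t, wt k * (inner ℝ w (z k) : ℝ) = 0 :=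
      (Finset.sum_eq_zero_iff_of_nonpos hterm).1 hsum
    have hzuv : ∀ k ∈ t, wt k ≠ 0 → z k ∈ ({u, -u} : Set (EuclideanSpace ℝ (Fin n))) := by
      intro k hk hwk'
      have h0 : (inner ℝ w (z k) : ℝ) = 0 := by
        rcases mul_eq_zero.1 (hzero k hk) with h | h
        · exact absurd h hwk'
        · exact h
      rcases hAB (z k) (hz k hk) with ⟨_, h | h⟩ | h1
      · simp [h]
      · simp [h]
      · rw [h0] at h1; norm_num at h1
    have hxseg : x ∈ convexHull ℝ ({u, -u} : Set (EuclideanSpace ℝ (Fin n))) := by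
      rw [← hxc, ← Finset.centerMass_filter_ne_zero]
      apply Finset.centerMass_mem_convexHull
      · intro k hk
        exact hw0 k (Finset.mem_filter.1 hk).1
      · rw [Finset.sum_filter_ne_zero, hw1]
        norm_num
      · intro k hk
        obtain ⟨hkt, hkne⟩ := Finset.mem_filter.1 hk
        exact hzuv k hkt hkne
    rwa [convexHull_pair] at hxseg


/-- If every edge of the convex hull of `M ⊆ crossVerts n` is parallel to
a `D_n` root, then `M` satisfies the strong exchange property with respect to `D_n`. -/
theorem crossPolytope_Dn_coxeter_matroid_is_strong
    {n : ℕ} (M : Set (EuclideanSpace ℝ (Fin n))) (hM : M ⊆ crossVerts n)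
    (hedge : ∀ u ∈ M, ∀ w ∈ M, u ≠ w →
      IsExposed ℝ (convexHull ℝ M) (segment ℝ u w) →
      ∃ α ∈ PhiD n, ∃ c : ℝ, u - w = c • α) :
    ∀ u ∈ M, ∀ v ∈ M, u ≠ v → ∃ α ∈ PhiD n,
      (inner ℝ u α : ℝ) * (inner ℝ v α : ℝ) < 0 ∧ reflVec α u ∈ M ∧ reflVec α v ∈ M := by
  intro u hu v hv huv
  obtain ⟨i, hui⟩ := hM hu
  obtain ⟨j, hvj⟩ := hM hv
  obtain ⟨σ, hσ, hu'⟩ : ∃ σ : ℝ, (σ = 1 ∨ σ = -1) ∧ u = σ • stdVec n i := by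
    rcases hui with h | h
    · exact ⟨1, Or.inl rfl, by simp [h]⟩
    · exact ⟨-1, Or.inr rfl, by simp [h]⟩
  obtain ⟨τ, hτ, hv'⟩ : ∃ τ : ℝ, (τ = 1 ∨ τ = -1) ∧ v = τ • stdVec n j := by
    rcases hvj with h | h
    · exact ⟨1, Or.inl rfl, by simp [h]⟩
    · exact ⟨-1, Or.inr rfl, by simp [h]⟩
  by_cases hij : i = j
  · -- same axis : v = -u
    subst hij
    have hvneg : v = -u := by
      rcases hσ with rfl | rfl <;> rcases hτ with rfl | rfl
      · exact absurd (hu'.trans hv'.symm) huv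
      · rw [hu', hv']; module
      · rw [hu', hv']; module
      · exact absurd (hu'.trans hv'.symm) huv
    by_cases hpair : ∃ k, k ≠ i ∧ stdVec n k ∈ M ∧ -stdVec n k ∈ M
    · obtain ⟨k, hki, hk1, hk2⟩ := hpair
      obtain ⟨hα, h1, h2, r1, r2⟩ := key (Ne.symm hki) hσ (Or.inl rfl : (1:ℝ) = 1 ∨ (1:ℝ) = -1)
      refine ⟨_, hα, ?_, ?_, ?_⟩
      · rw [hvneg, inner_neg_left, hu', h1]
        norm_num
      · rw [hu', r1, one_smul]
        exact hk1
      · rw [hvneg, reflVec_neg, hu', r1, one_smul]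
        exact hk2
    · exfalso
      push_neg at hpair
      have hexp : IsExposed ℝ (convexHull ℝ M) (segment ℝ u (-u)) :=
        exposed_aux M hM hui hu (hvneg ▸ hv) fun k hk h => hpair k hk h.1 h.2
      obtain ⟨α, hαmem, c, hc⟩ := hedge u hu v hv huv (by rwa [hvneg])
      obtain ⟨p, q, hpq, ε, δ, hε, hδ, rfl⟩ := hαmem
      have hcoord : ∀ k : Fin n, (u - v) k = c * (ε * (stdVec n p) k + δ * (stdVec n q) k) := by
        intro k
        have h := congrArg (fun x : EuclideanSpace ℝ (Fin n) => x k) hc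
        simpa [PiLp.sub_apply, PiLp.add_apply, PiLp.smul_apply, smul_eq_mul, mul_add] using h
      have huk : ∀ k : Fin n, u k = σ * (if k = i then 1 else 0) := by
        intro k
        rw [hu']
        simp [stdVec, PiLp.smul_apply, EuclideanSpace.single_apply, smul_eq_mul]
      have key0 : ∀ k : Fin n, k ≠ i →
          (0 : ℝ) = c * (ε * stdVec n p k + δ * stdVec n q k) := by
        intro k hk
        have h := hcoord k
        rw [PiLp.sub_apply, hvneg, PiLp.neg_apply, huk k, if_neg hk] at h
        simpa using h
      have hc0 : c = 0 := by
        rcases eq_or_ne p i with hpi | hpi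
        · have hqi : q ≠ i := fun h => hpq (hpi.trans h.symm)
          have h := key0 q hqi
          rw [show stdVec n p q = 0 from by
                simp [stdVec, EuclideanSpace.single_apply, if_neg (Ne.symm hpq)],
              show stdVec n q q = 1 from by simp [stdVec, EuclideanSpace.single_apply]] at h
          rcases hε with rfl | rfl <;> rcases hδ with rfl | rfl <;> linarith
        · have h := key0 p hpi
          rw [show stdVec n p p = 1 from by simp [stdVec, EuclideanSpace.single_apply],
              show stdVec n q p = 0 from by
                simp [stdVec, EuclideanSpace.single_apply, if_neg hpq]] at h
          rcases hε with rfl | rfl <;> rcases hδ with rfl | rfl <;> linarith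
      rw [hc0, zero_smul, sub_eq_zero] at hc
      exact huv hc
  · -- different axes
    obtain ⟨hα, h1, h2, r1, r2⟩ := key hij hσ hτ
    refine ⟨_, hα, ?_, ?_, ?_⟩
    · rw [hu', hv', h1, h2]
      norm_num
    · rw [hu', r1, ← hv']
      exact hv
    · rw [hv', r2, ← hu']
      exact hu
end

section
/- Fix n ∈ ℕ and write [n] = {1,…,n}. Let N, L ⊆ [n] be disjoint, let S = [n] ∖ (N ∪ L), and let K be a subset with N ⊆ K ⊆ [n] ∖ L; set K̄ = K Δ S. For disjoint finite sets A, B of naturals let inv(A,B) = |{(a,b) ∈ A × B : a > b}|, for i ∈ ℕ and a finite set A let ℓ(i,A) = |{a ∈ A : a < i}|, and define [K,K̄] = |[n] ∖ K̄|·(|N| + |L|) + C(|[n] ∖ K̄|, 2) + inv([n] ∖ K̄, K̄) + n·|K̄| + inv(L, K ∖ N) + C(|N|, 2) + inv(N, K ∖ N). Then for every i ∈ S, [K,K̄] + [K Δ {i}, (K Δ {i}) Δ S] + ℓ(i, K Δ {i}) + ℓ(i, K̄ Δ {i}) + n is even, where [K Δ {i}, (K Δ {i}) Δ S] is given by the same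 formula with K replaced by K Δ {i} (note (K Δ {i}) Δ S = K̄ Δ {i}). -/
open scoped symmDiff

/-- `inv(A,B)`: the number of pairs `(a,b) ∈ A × B` with `a > b`. -/
def invCount {n : ℕ} (A B : Finset (Fin n)) : ℕ :=
  ((A ×ˢ B).filter (fun p => p.2 < p.1)).card

/-- `ℓ(i,A)`: the number of elements of `A` smaller than `i`. -/
def low {n : ℕ} (i : Fin n) (A : Finset (Fin n)) : ℕ :=
  (A.filter (fun a => a < i)).card

/-- The sign exponent `[K, K̄]` attached to the ordered antipode `(K, K Δ S)` of the
subcube `Q_{N,L}`, where `S = [n] ∖ (N ∪ L)` and complements are taken in `[n]`. -/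
def signExp {n : ℕ} (N L K : Finset (Fin n)) : ℕ :=
  (K ∆ (N ∪ L)ᶜ)ᶜ.card * (N.card + L.card)
    + Nat.choose (K ∆ (N ∪ L)ᶜ)ᶜ.card 2
    + invCount (K ∆ (N ∪ L)ᶜ)ᶜ (K ∆ (N ∪ L)ᶜ)
    + n * (K ∆ (N ∪ L)ᶜ).card
    + invCount L (K \ N)
    + Nat.choose N.card 2
    + invCount N (K \ N)

/-!
Everything is computed modulo 2. The expression is symmetric under `K ↔ K Δ {i}`, so we may
assume `i ∉ K`; adding `i` to `K` then removes it from `K̄ = K Δ S`. Since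
`inv(A, B ∪ {i}) = inv(A, B) + |A| - ℓ(i, A)` for `i ∉ A ∪ B`, the terms of `[K,K̄]` determined
by `K̄` change by `|N| + |L| + n + ℓ(i,[n])` and those determined by `K ∖ N` by
`|N| + |L| + ℓ(i,N) + ℓ(i,L)`. As `[n]` is the disjoint union of `N`, `L` and `S`, the total
change is `n + ℓ(i,S)`, which is also `n + ℓ(i,K) + ℓ(i,K̄)` because `K̄ = K Δ S`.
-/

open Finset

namespace Finset

variable {α : Type*} [DecidableEq α]

lemma card_symmDiff_cast (s t : Finset α) :
    (#(s ∆ t) : ZMod 2) = #s + #t := by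
  have hst := card_sdiff_add_card_inter s t
  have hts := card_sdiff_add_card_inter t s
  have hsymm : #(s ∆ t) = #(s \ t) + #(t \ s) := card_union_of_disjoint disjoint_sdiff_sdiff
  rw [inter_comm] at hts
  rw [← hst, ← hts, hsymm]
  push_cast
  linear_combination (norm := (ring_nf; reduce_mod_char))

lemma symmDiff_singleton_of_mem {s : Finset α} {a : α}
    (h : a ∈ s) : s ∆ {a} = s.erase a := by
  ext x
  by_cases hx : x = a <;> simp [mem_symmDiff, hx, h]

lemma symmDiff_singleton_of_notMem {s : Finset α} {a : α}
    (h : a ∉ s) : s ∆ {a} = insert a s := by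
  ext x
  by_cases hx : x = a <;> simp [mem_symmDiff, hx, h]

end Finset

section

variable {n : ℕ}

lemma low_symmDiff (i : Fin n) (A B : Finset (Fin n)) :
    (low i (A ∆ B) : ZMod 2) = low i A + low i B := by
  have hfilter : (A ∆ B).filter (· < i) = A.filter (· < i) ∆ B.filter (· < i) := by
    ext a
    simp only [mem_filter, mem_symmDiff]
    tauto
  simp only [low, hfilter, card_symmDiff_cast]

lemma low_singleton_self (i : Fin n) : low i {i} = 0 := by
  simp [low]

lemma low_union_of_disjoint (i : Fin n) {A B : Finset (Fin n)} (h : Disjoint A B) :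
    low i (A ∪ B) = low i A + low i B := by
  rw [low, filter_union, card_union_of_disjoint (disjoint_filter_filter h)]
  rfl

lemma low_univ (i : Fin n) : low i univ = i := by
  rw [low, filter_gt_eq_Iio, Fin.card_Iio]

lemma low_add_low_compl (i : Fin n) (A : Finset (Fin n)) : low i A + low i Aᶜ = i := by
  rw [← low_union_of_disjoint i disjoint_compl_right, union_compl, low_univ]

lemma low_insert_of_notMem {i : Fin n} {B : Finset (Fin n)} (hi : i ∉ B) (a : Fin n) :
    low a (insert i B) = low a B + if i < a then 1 else 0 := by
  rw [low, filter_insert]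
  split_ifs with h
  · rw [card_insert_of_notMem (fun hm => hi (mem_of_mem_filter _ hm))]
    rfl
  · rfl

lemma invCount_eq_sum_low (A B : Finset (Fin n)) : invCount A B = ∑ a ∈ A, low a B := by
  rw [invCount, card_filter, sum_product]
  exact sum_congr rfl fun a _ => (card_filter _ _).symm

lemma invCount_insert_left {i : Fin n} {A : Finset (Fin n)} (hi : i ∉ A) (B : Finset (Fin n)) :
    invCount (insert i A) B = invCount A B + low i B := by
  rw [invCount_eq_sum_low, invCount_eq_sum_low, sum_insert hi, add_comm]

lemma card_filter_gt_add_low {i : Fin n} {A : Finset (Fin n)} (hi : i ∉ A) :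
    #(A.filter (i < ·)) + low i A = #A := by
  rw [low, ← card_filter_add_card_filter_not (s := A) (i < ·)]
  congr 2
  ext a
  simp only [mem_filter, not_lt, and_congr_right_iff]
  exact fun ha => ⟨le_of_lt, fun h => lt_of_le_of_ne h (ne_of_mem_of_not_mem ha hi)⟩

lemma invCount_insert_right {i : Fin n} {A B : Finset (Fin n)} (hiA : i ∉ A) (hiB : i ∉ B) :
    invCount A (insert i B) + low i A = invCount A B + #A := by
  simp only [invCount_eq_sum_low, low_insert_of_notMem hiB, sum_add_distrib, sum_boole,
    Nat.cast_id, add_assoc, card_filter_gt_add_low hiA]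

def signExpBar (c : ℕ) (M : Finset (Fin n)) : ℕ :=
  #Mᶜ * c + (#Mᶜ).choose 2 + invCount Mᶜ M + n * #M

def signExpFree (N L D : Finset (Fin n)) : ℕ :=
  invCount L D + (#N).choose 2 + invCount N D

lemma signExp_eq_bar_add_free (N L K : Finset (Fin n)) :
    signExp N L K = signExpBar (#N + #L) (K ∆ (N ∪ L)ᶜ) + signExpFree N L (K \ N) := by
  simp only [signExp, signExpBar, signExpFree]
  ring

lemma signExpBar_insert_add {i : Fin n} {M : Finset (Fin n)} (hi : i ∉ M) (c : ℕ) :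
    (signExpBar c (insert i M) + signExpBar c M : ZMod 2) = c + n + i := by
  have hMc : Mᶜ = insert i (insert i M)ᶜ := by
    rw [compl_insert, insert_erase (mem_compl.2 hi)]
  have hiX : i ∉ (insert i M)ᶜ := by simp
  have hlow : low i M + low i (insert i M)ᶜ = i := by
    rw [← low_add_low_compl i M, hMc, low_insert_of_notMem hiX]
    simp
  have hright := invCount_insert_right hiX hi
  simp only [signExpBar]
  rw [hMc, card_insert_of_notMem hiX, card_insert_of_notMem hi, Nat.choose_succ_succ',
    Nat.choose_one_right, invCount_insert_left hiX]
  apply_fun ((↑) : ℕ → ZMod 2) at hlow hright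
  push_cast at hlow hright ⊢
  linear_combination (norm := (ring_nf; reduce_mod_char)) hlow + hright

lemma signExpFree_insert_add {i : Fin n} {N L D : Finset (Fin n)} (hiN : i ∉ N) (hiL : i ∉ L)
    (hiD : i ∉ D) :
    (signExpFree N L (insert i D) + signExpFree N L D : ZMod 2) = #N + #L + low i N + low i L := by
  have hL := invCount_insert_right hiL hiD
  have hN := invCount_insert_right hiN hiD
  simp only [signExpFree]
  apply_fun ((↑) : ℕ → ZMod 2) at hL hN
  push_cast at hL hN ⊢
  linear_combination (norm := (ring_nf; reduce_mod_char)) hL + hN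

lemma signExp_add_signExp_insert {N L K : Finset (Fin n)} (hNL : Disjoint N L)
    {i : Fin n} (hi : i ∈ (N ∪ L)ᶜ) (hiK : i ∉ K) :
    (signExp N L K + signExp N L (insert i K) : ZMod 2) = low i (N ∪ L)ᶜ + n := by
  obtain ⟨hiN, hiL⟩ : i ∉ N ∧ i ∉ L := by simpa using hi
  have hiBar : i ∉ insert i K ∆ (N ∪ L)ᶜ := by simp [mem_symmDiff, hiN, hiL]
  have hBar : K ∆ (N ∪ L)ᶜ = insert i (insert i K ∆ (N ∪ L)ᶜ) := by
    ext a
    by_cases ha : a = i <;> simp [mem_symmDiff, ha, hiK, hiN, hiL]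
  have hbar := signExpBar_insert_add hiBar (#N + #L)
  have hfree := signExpFree_insert_add hiN hiL (D := K \ N) (fun h => hiK (mem_sdiff.1 h).1)
  have hlow := low_add_low_compl i (N ∪ L)ᶜ
  rw [compl_compl, low_union_of_disjoint i hNL] at hlow
  rw [signExp_eq_bar_add_free, signExp_eq_bar_add_free, hBar, insert_sdiff_of_notMem _ hiN]
  apply_fun ((↑) : ℕ → ZMod 2) at hlow
  push_cast at hbar hlow ⊢
  linear_combination (norm := (ring_nf; reduce_mod_char)) hbar + hfree + hlow

end

theorem signExp_antipode_parity_general {n : ℕ} (N L K : Finset (Fin n))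
    (hNL : Disjoint N L) :
    ∀ i ∈ ((N ∪ L)ᶜ : Finset (Fin n)),
      Even (signExp N L K + signExp N L (K ∆ {i})
        + low i (K ∆ {i}) + low i ((K ∆ (N ∪ L)ᶜ) ∆ {i}) + n) := by
  intro i hi
  have hpair : signExp N L K + signExp N L (K ∆ {i})
      = signExp N L (K.erase i) + signExp N L (insert i (K.erase i)) := by
    by_cases hiK : i ∈ K
    · rw [insert_erase hiK, symmDiff_singleton_of_mem hiK, add_comm]
    · rw [erase_eq_of_notMem hiK, symmDiff_singleton_of_notMem hiK]
  have hflip := signExp_add_signExp_insert hNL hi (notMem_erase i K)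
  rw [← ZMod.natCast_eq_zero_iff_even]
  push_cast
  rw [← Nat.cast_add, hpair, Nat.cast_add, hflip, low_symmDiff, low_symmDiff, low_symmDiff,
    low_singleton_self]
  linear_combination (norm := (ring_nf; reduce_mod_char))

/-- For every `i ∈ S`, the quantity
`[K,K̄] + [K Δ {i}, K̄ Δ {i}] + ℓ(i, K Δ {i}) + ℓ(i, K̄ Δ {i}) + n` is even. -/
theorem signExp_antipode_parity {n : ℕ} (N L K : Finset (Fin n))
    (hNL : Disjoint N L) (hNK : N ⊆ K) (hKL : Disjoint K L) :
    ∀ i ∈ ((N ∪ L)ᶜ : Finset (Fin n)),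
      Even (signExp N L K + signExp N L (K ∆ {i})
        + low i (K ∆ {i}) + low i ((K ∆ (N ∪ L)ᶜ) ∆ {i}) + n) :=
  signExp_antipode_parity_general N L K hNL
end
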